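/- Let 1 ≤ d < D be integers and let p ∈ (0,1). Then P_p-almost surely there exist constants c₁, c₂, c₃, c₄, c₅ ∈ (0, ∞), a subset U of the set W_p(Z^D) of open sites, and a map f : Z^d → U that is a quasi-isometry between the metric spaces (Z^d, ℓ¹) and (U, ℓ¹). -/

import Mathlib

open MeasureTheory

/-- The ℓ¹-norm of an integer vector. -/
def norm1 {n : ℕ} (x : Fin n → ℤ) : ℤ := ∑ i, |x i|

/-- The ℓ¹-distance between two integer vectors, as a real number. -/
noncomputable def dist1 {n : ℕ} (x y : Fin n → ℤ) : ℝ := (norm1 (x - y) : ℝ)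

/-- `μ` is a product Bernoulli(`p`) measure on site configurations: a probability
measure under which the states of finitely many sites are independent, each site
being open (`true`) with probability `p`. -/
def IsBernoulli {S : Type*} (p : ℝ) (μ : Measure (S → Bool)) : Prop :=
  IsProbabilityMeasure μ ∧
    ∀ (A : Finset S) (b : S → Bool),
      μ {ω | ∀ s ∈ A, ω s = b s} = ∏ s ∈ A, ENNReal.ofReal (if b s then p else 1 - p)

/-- There is a quasi-isometry from `(ℤ^d, ℓ¹)` to some subspace `U` of the set of
open sites of the configuration `ω` on `ℤ^D`, equipped with the ℓ¹ metric. -/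
def ExistsQuasiIsometry (d D : ℕ) (ω : (Fin D → ℤ) → Bool) : Prop :=
  ∃ c₁ c₂ c₃ c₄ c₅ : ℝ, 0 < c₁ ∧ 0 < c₂ ∧ 0 < c₃ ∧ 0 < c₄ ∧ 0 < c₅ ∧
    ∃ U : Set (Fin D → ℤ), U ⊆ {y | ω y = true} ∧
      ∃ f : (Fin d → ℤ) → (Fin D → ℤ),
        (∀ x, f x ∈ U) ∧
        (∀ x x', c₁ * dist1 x x' - c₂ ≤ dist1 (f x) (f x') ∧
                 dist1 (f x) (f x') ≤ c₃ * dist1 x x' + c₄) ∧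
        (∀ y ∈ U, ∃ x, dist1 (f x) y ≤ c₅)


/-!
Group `ℤ^(d+1) ⊆ ℤ^D` into vertical boxes of `K` consecutive sites, and call a box closed when all
of its sites are. In `ℤ^d × ℤ` consider paths that start at height `1` and move either one level
up, which is allowed only out of a closed box, or to a neighbouring column and one level down.
The highest reachable height `φ x` of column `x` is `1`-Lipschitz in `x`, and the box at
`(x, φ x)` is open, so picking an open site in each of these boxes embeds `ℤ^d`
quasi-isometrically. After loop erasure, a path of length `n` that gains `a` levels climbs out of
`(n + a) / 2` distinct closed boxes, so a Peierls count over the `(2d + 1)^n` paths shows that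
`φ` is almost surely finite once `(1 - p)^K` is small.
-/

open Finset
open scoped ENNReal

section Norm1

variable {n : ℕ}

lemma norm1_nonneg (x : Fin n → ℤ) : 0 ≤ norm1 x :=
  sum_nonneg fun i _ => abs_nonneg (x i)

lemma norm1_eq_zero {x : Fin n → ℤ} : norm1 x = 0 ↔ x = 0 := by
  simp [norm1, sum_eq_zero_iff_of_nonneg, funext_iff]

lemma norm1_sub_comm (x y : Fin n → ℤ) : norm1 (x - y) = norm1 (y - x) := by
  simp only [norm1, Pi.sub_apply, abs_sub_comm]

lemma norm1_smul (c : ℤ) (x : Fin n → ℤ) : norm1 (c • x) = |c| * norm1 x := by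
  simp [norm1, mul_sum, abs_mul]

lemma norm1_cons (t : ℤ) (x : Fin n → ℤ) :
    norm1 (Fin.cons t x : Fin (n + 1) → ℤ) = |t| + norm1 x := by
  simp only [norm1, Fin.sum_univ_succ, Fin.cons_zero, Fin.cons_succ]

lemma norm1_append_zero {m : ℕ} (x : Fin n → ℤ) :
    norm1 (Fin.append x (0 : Fin m → ℤ)) = norm1 x := by
  simp [norm1, Fin.sum_univ_add]

lemma norm1_sub_single_add_one {x : Fin n → ℤ} {i : Fin n} (hx : x i ≠ 0) :
    norm1 (x - Pi.single i (if 0 < x i then 1 else -1)) + 1 = norm1 x := by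
  classical
  have hcoord : |x i - if 0 < x i then 1 else -1| + 1 = |x i| := by
    split_ifs with h
    · rw [abs_of_pos h, abs_of_nonneg (by omega)]; ring
    · have h' : x i < 0 := lt_of_le_of_ne (not_lt.mp h) hx
      rw [abs_of_neg h', abs_of_nonpos (by omega)]; ring
  have hrest : ∑ j ∈ univ.erase i,
      |(x - Pi.single i (if 0 < x i then 1 else -1) : Fin n → ℤ) j| = ∑ j ∈ univ.erase i, |x j| :=
    sum_congr rfl fun j hj => by simp [Pi.single_eq_of_ne (ne_of_mem_erase hj)]
  rw [norm1, norm1, ← add_sum_erase _ _ (mem_univ i), ← add_sum_erase _ _ (mem_univ i), hrest]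
  simp only [Pi.sub_apply, Pi.single_eq_same]
  linarith

end Norm1

lemma IsBernoulli.measure_forall_eq_false {S : Type*} {p : ℝ} {μ : Measure (S → Bool)}
    (hμ : IsBernoulli p μ) (A : Finset S) :
    μ {ω | ∀ s ∈ A, ω s = false} = ENNReal.ofReal (1 - p) ^ A.card := by
  simpa using hμ.2 A fun _ => false

lemma lt_one_of_card_mul_le_inv_two {M : Type*} [Fintype M] [Nonempty M] {η : ℝ≥0∞}
    (h : (Fintype.card M : ℝ≥0∞) * η ≤ 2⁻¹) : η < 1 :=
  calc η ≤ Fintype.card M * η := le_mul_of_one_le_left' (Nat.one_le_cast.mpr Fintype.card_pos)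
    _ ≤ 2⁻¹ := h
    _ < 1 := ENNReal.inv_lt_one.mpr ENNReal.one_lt_two

lemma tsum_pow_length_le_two {M : Type*} [Fintype M] {η : ℝ≥0∞}
    (h : (Fintype.card M : ℝ≥0∞) * η ≤ 2⁻¹) : ∑' l : List M, η ^ l.length ≤ 2 := by
  have hfiber (n : ℕ) : ∑' _ : {l : List M // l.length = n}, η ^ n ≤ 2⁻¹ ^ n := by
    have : Fintype {l : List M // l.length = n} := inferInstanceAs (Fintype (List.Vector M n))
    rw [tsum_fintype (L := .unconditional _), sum_const, card_univ, nsmul_eq_mul]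
    have hcard : Fintype.card {l : List M // l.length = n} = Fintype.card M ^ n :=
      (Fintype.card_congr (show {l : List M // l.length = n} ≃ List.Vector M n from
        Equiv.refl _)).trans (card_vector n)
    rw [hcard, Nat.cast_pow, ← mul_pow]
    exact pow_le_pow_left₀ zero_le h n
  calc ∑' l : List M, η ^ l.length
      = ∑' n, ∑' _ : {l : List M // l.length = n}, η ^ n := by
        rw [← ENNReal.tsum_sigma (fun n (_ : {l : List M // l.length = n}) => η ^ n),
          ← (Equiv.sigmaFiberEquiv List.length).tsum_eq]
        exact tsum_congr fun ⟨n, l, hl⟩ => by simp [hl]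
    _ ≤ ∑' n : ℕ, (2⁻¹ : ℝ≥0∞) ^ n := ENNReal.tsum_le_tsum hfiber
    _ = 2 := by rw [ENNReal.tsum_geometric, ENNReal.one_sub_inv_two, inv_inv]

lemma existsQuasiIsometry_of_bounds {d D : ℕ} {ω : (Fin D → ℤ) → Bool}
    (f : (Fin d → ℤ) → (Fin D → ℤ)) (hopen : ∀ x, ω (f x) = true) {c₁ c₂ c₃ c₄ : ℝ}
    (h₁ : 0 < c₁) (h₂ : 0 < c₂) (h₃ : 0 < c₃) (h₄ : 0 < c₄)
    (hf : ∀ x x', c₁ * dist1 x x' - c₂ ≤ dist1 (f x) (f x') ∧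
      dist1 (f x) (f x') ≤ c₃ * dist1 x x' + c₄) :
    ExistsQuasiIsometry d D ω := by
  refine ⟨c₁, c₂, c₃, c₄, 1, h₁, h₂, h₃, h₄, one_pos, Set.range f, ?_, f, fun x => ⟨x, rfl⟩, hf,
    ?_⟩
  · rintro _ ⟨x, rfl⟩
    exact hopen x
  · rintro _ ⟨x, rfl⟩
    exact ⟨x, by simp [dist1, norm1]⟩

namespace LipschitzSurface

variable {d : ℕ}

abbrev Pt (d : ℕ) := (Fin d → ℤ) × ℤ

abbrev Move (d : ℕ) := Option (Fin d × Bool)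

def shift : Move d → Pt d
  | none => (0, 1)
  | some (i, b) => (Pi.single i (if b then 1 else -1), -1)

def displacement (l : List (Move d)) : Pt d := (l.map shift).sum

@[simp] lemma displacement_nil : displacement ([] : List (Move d)) = 0 := rfl

@[simp] lemma displacement_cons (mv : Move d) (l : List (Move d)) :
    displacement (mv :: l) = shift mv + displacement l := List.sum_cons

@[simp] lemma displacement_append (l₁ l₂ : List (Move d)) :
    displacement (l₁ ++ l₂) = displacement l₁ + displacement l₂ := by
  simp [displacement]

lemma displacement_snd_add_length (l : List (Move d)) :
    (displacement l).2 + l.length = 2 * l.count none := by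
  induction l with
  | nil => simp
  | cons mv l ih =>
    rcases mv with _ | ⟨i, b⟩ <;> simp [shift] <;> linarith

def climbStates : Pt d → List (Move d) → List (Pt d)
  | _, [] => []
  | p, none :: l => p :: climbStates (p + shift none) l
  | p, some m :: l => climbStates (p + shift (some m)) l

lemma length_climbStates (p : Pt d) (l : List (Move d)) :
    (climbStates p l).length = l.count none := by
  induction l generalizing p with
  | nil => rfl
  | cons mv l ih => rcases mv with _ | m <;> simp [climbStates, ih]

lemma climbStates_append (p : Pt d) (l₁ l₂ : List (Move d)) :
    climbStates p (l₁ ++ l₂) = climbStates p l₁ ++ climbStates (p + displacement l₁) l₂ := by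
  induction l₁ generalizing p with
  | nil => simp [climbStates]
  | cons mv l ih => rcases mv with _ | m <;> simp [climbStates, ih, add_assoc]

lemma exists_append_of_mem_climbStates {p q : Pt d} {l : List (Move d)}
    (hq : q ∈ climbStates p l) : ∃ l₁ l₂, l = l₁ ++ l₂ ∧ p + displacement l₁ = q := by
  induction l generalizing p with
  | nil => simp [climbStates] at hq
  | cons mv l ih =>
    rcases mv with _ | m
    · rcases List.mem_cons.mp hq with rfl | hq
      · exact ⟨[], _, rfl, by simp⟩
      · obtain ⟨l₁, l₂, rfl, rfl⟩ := ih hq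
        exact ⟨none :: l₁, l₂, rfl, by simp [add_assoc]⟩
    · obtain ⟨l₁, l₂, rfl, rfl⟩ := ih hq
      exact ⟨some m :: l₁, l₂, rfl, by simp [add_assoc]⟩

lemma exists_loop_of_not_nodup {p : Pt d} {l : List (Move d)}
    (h : ¬ (climbStates p l).Nodup) :
    ∃ l₁ l₂ l₃, l = l₁ ++ l₂ ++ l₃ ∧ l₂ ≠ [] ∧ displacement l₂ = 0 := by
  induction l generalizing p with
  | nil => simp [climbStates] at h
  | cons mv l ih =>
    rcases mv with _ | m
    · rw [climbStates, List.nodup_cons, not_and_or, not_not] at h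
      rcases h with hmem | h
      · obtain ⟨l₁, l₂, rfl, hl₁⟩ := exists_append_of_mem_climbStates hmem
        refine ⟨[], none :: l₁, l₂, rfl, List.cons_ne_nil _ _, ?_⟩
        simpa [add_assoc] using hl₁
      · obtain ⟨l₁, l₂, l₃, rfl, hne, hloop⟩ := ih h
        exact ⟨none :: l₁, l₂, l₃, rfl, hne, hloop⟩
    · obtain ⟨l₁, l₂, l₃, rfl, hne, hloop⟩ := ih h
      exact ⟨some m :: l₁, l₂, l₃, rfl, hne, hloop⟩

lemma exists_nodup_climbStates (p : Pt d) (l : List (Move d)) :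
    ∃ l', displacement l' = displacement l ∧ (climbStates p l').Nodup ∧
      climbStates p l' ⊆ climbStates p l := by
  induction hn : l.length using Nat.strong_induction_on generalizing l with
  | _ n ih =>
    by_cases hnd : (climbStates p l).Nodup
    · exact ⟨l, rfl, hnd, List.Subset.refl _⟩
    obtain ⟨l₁, l₂, l₃, rfl, hne, hloop⟩ := exists_loop_of_not_nodup hnd
    have hlt : (l₁ ++ l₃).length < n := by
      have := List.length_pos_iff.mpr hne
      simp only [← hn, List.length_append]; omega
    obtain ⟨l', hdisp, hnd', hsub⟩ := ih _ hlt (l₁ ++ l₃) rfl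
    refine ⟨l', by simp [hdisp, hloop], hnd', fun q hq => ?_⟩
    have := hsub hq
    simp only [climbStates_append, displacement_append, hloop, add_zero, List.mem_append] at this ⊢
    tauto

def Reach (bad : Pt d → Prop) (q : Pt d) : Prop :=
  ∃ y l, (∀ c ∈ climbStates (y, 1) l, bad c) ∧ (y, (1 : ℤ)) + displacement l = q

variable {bad : Pt d → Prop}

lemma reach_one (x : Fin d → ℤ) : Reach bad (x, 1) := ⟨x, [], by simp [climbStates], by simp⟩

lemma Reach.add_shift {q : Pt d} (hq : Reach bad q) (mv : Move d) (hmv : mv = none → bad q) :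
    Reach bad (q + shift mv) := by
  obtain ⟨y, l, hbad, rfl⟩ := hq
  refine ⟨y, l ++ [mv], fun c hc => ?_, by simp [add_assoc]⟩
  rw [climbStates_append, List.mem_append] at hc
  rcases hc with hc | hc
  · exact hbad c hc
  · rcases mv with _ | m <;> simp only [climbStates, List.mem_singleton, List.not_mem_nil] at hc
    exact hc ▸ hmv rfl

lemma Reach.sub_norm1 {x : Fin d → ℤ} {h : ℤ} (hr : Reach bad (x, h)) (x' : Fin d → ℤ) :
    Reach bad (x', h - norm1 (x' - x)) := by
  induction hn : (norm1 (x' - x)).toNat generalizing x' with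
  | zero =>
    have : x' = x := sub_eq_zero.mp (norm1_eq_zero.mp (by have := norm1_nonneg (x' - x); omega))
    simpa [this, norm1] using hr
  | succ n ih =>
    have hne : x' - x ≠ 0 := fun h0 => by rw [h0] at hn; simp [norm1] at hn
    obtain ⟨i, hi⟩ := Function.ne_iff.mp hne
    set b := decide (0 < (x' - x) i)
    have hstep := norm1_sub_single_add_one hi
    have hprev := ih (x' - Pi.single i (if b then 1 else -1)) (by
      simp only [b, decide_eq_true_eq, sub_right_comm x' _ x]; omega)
    convert hprev.add_shift (some (i, b)) (by simp) using 1
    simp only [shift, b, decide_eq_true_eq, Prod.mk_add_mk, sub_add_cancel, sub_right_comm x' _ x]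
    congr 1; linarith

theorem exists_lipschitz_surface (hbdd : ∀ x, BddAbove {h | Reach bad (x, h)}) :
    ∃ φ : (Fin d → ℤ) → ℤ, (∀ x, ¬ bad (x, φ x)) ∧ ∀ x x', |φ x - φ x'| ≤ norm1 (x - x') := by
  have hmem : ∀ x, Reach bad (x, sSup {h | Reach bad (x, h)}) := fun x =>
    Int.csSup_mem ⟨1, reach_one x⟩ (hbdd x)
  have hle : ∀ x h, Reach bad (x, h) → h ≤ sSup {h | Reach bad (x, h)} := fun x _ hr =>
    le_csSup (hbdd x) hr
  refine ⟨fun x => sSup {h | Reach bad (x, h)}, fun x hbadx => ?_, fun x x' => ?_⟩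
  · have := hle x _ (by simpa [shift] using (hmem x).add_shift none fun _ => hbadx)
    omega
  · have h₁ := hle x' _ ((hmem x).sub_norm1 x')
    have h₂ := hle x _ ((hmem x').sub_norm1 x)
    rw [norm1_sub_comm] at h₁
    exact abs_le.mpr ⟨by linarith, by linarith⟩

variable {k : ℕ}

/-- The sites with `j < K` form the box representing `q`; coordinate `0` is the vertical one. -/
def site (K : ℕ) (q : Pt d) (j : ℕ) : Fin (d + 1 + k) → ℤ :=
  Fin.append (Fin.cons ((K : ℤ) * q.2 + j) ((K : ℤ) • q.1) : Fin (d + 1) → ℤ) 0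

lemma norm1_site_sub (K : ℕ) (q q' : Pt d) (j j' : ℕ) :
    norm1 (site (k := k) K q j - site K q' j') =
      |(K : ℤ) * (q.2 - q'.2) + (j - j')| + K * norm1 (q.1 - q'.1) := by
  have hsub : site (k := k) K q j - site K q' j' =
      Fin.append (Fin.cons ((K : ℤ) * (q.2 - q'.2) + (j - j')) ((K : ℤ) • (q.1 - q'.1)) :
        Fin (d + 1) → ℤ) 0 := by
    ext i
    refine Fin.addCases (fun i => ?_) (fun i => ?_) i
    · refine Fin.cases ?_ (fun i => ?_) i <;> simp [site, smul_sub]; ring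
    · simp [site]
  rw [hsub, norm1_append_zero, norm1_cons, norm1_smul, abs_of_nonneg (Int.natCast_nonneg K)]

lemma site_inj {K : ℕ} {q q' : Pt d} {j j' : ℕ} (hj : j < K) (hj' : j' < K)
    (h : site (k := k) K q j = site K q' j') : q = q' ∧ j = j' := by
  have h0 := norm1_site_sub (k := k) K q q' j j'
  rw [h, sub_self, norm1_eq_zero.mpr rfl] at h0
  have hz := norm1_nonneg (q.1 - q'.1)
  have hK : (0 : ℤ) < K := by omega
  have h₁ : norm1 (q.1 - q'.1) = 0 := by nlinarith [abs_nonneg ((K : ℤ) * (q.2 - q'.2) + (j - j'))]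
  have h₂ : (K : ℤ) * (q.2 - q'.2) + (j - j') = 0 := by
    rw [h₁, mul_zero, add_zero] at h0; exact abs_eq_zero.mp h0.symm
  have h₃ : (K : ℤ) * (q.2 - q'.2) = 0 := Int.eq_zero_of_abs_lt_dvd (dvd_mul_right _ _)
    (by rw [abs_lt]; omega)
  have h₄ : q.2 = q'.2 := by
    have := (mul_eq_zero.mp h₃).resolve_left hK.ne'; omega
  exact ⟨Prod.ext (sub_eq_zero.mp (norm1_eq_zero.mp h₁)) h₄, by rw [h₃] at h₂; omega⟩

def box (K : ℕ) (q : Pt d) : Finset (Fin (d + 1 + k) → ℤ) := (range K).image (site K q)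

def BoxClosed (K : ℕ) (ω : (Fin (d + 1 + k) → ℤ) → Bool) (q : Pt d) : Prop :=
  ∀ s ∈ box K q, ω s = false

lemma card_box (K : ℕ) (q : Pt d) : (box (k := k) K q).card = K := by
  rw [box, card_image_of_injOn, card_range]
  intro j hj j' hj' h
  exact (site_inj (mem_range.mp hj) (mem_range.mp hj') h).2

lemma disjoint_box {K : ℕ} {q q' : Pt d} (h : q ≠ q') :
    Disjoint (box (k := k) K q) (box K q') := by
  simp only [box, disjoint_left, mem_image, mem_range, not_exists, not_and]
  rintro _ ⟨j, hj, rfl⟩ j' hj' hs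
  exact h (site_inj hj' hj hs).1.symm

variable {p : ℝ} {μ : Measure ((Fin (d + 1 + k) → ℤ) → Bool)}

lemma measure_forall_boxClosed (hμ : IsBernoulli p μ) (K : ℕ) (Q : Finset (Pt d)) :
    μ {ω | ∀ q ∈ Q, BoxClosed K ω q} = ENNReal.ofReal (1 - p) ^ (K * Q.card) := by
  classical
  have hset : {ω | ∀ q ∈ Q, BoxClosed (k := k) K ω q} =
      {ω | ∀ s ∈ Q.biUnion (box K), ω s = false} := by
    ext ω
    simp only [BoxClosed, Set.mem_ofPred_eq, mem_biUnion]
    exact ⟨fun h s ⟨q, hq, hs⟩ => h q hq s hs, fun h q hq s hs => h s ⟨q, hq, hs⟩⟩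
  rw [hset, hμ.measure_forall_eq_false, card_biUnion fun q _ q' _ h => disjoint_box h]
  simp [card_box, mul_comm]

/-- Boxes have height `2K` so that a loop-erased path of length `n` gaining `a` levels, which
climbs `(n + a) / 2` times, is open with probability `((1 - p) ^ K) ^ (n + a)`. -/
lemma measure_reach_ge_le (hμ : IsBernoulli p μ) {K : ℕ}
    (hsmall : (Fintype.card (Move d) : ℝ≥0∞) * ENNReal.ofReal (1 - p) ^ K ≤ 2⁻¹)
    (x : Fin d → ℤ) (a : ℕ) :
    μ {ω | ∃ h, 1 + (a : ℤ) ≤ h ∧ Reach (BoxClosed (2 * K) ω) (x, h)} ≤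
      2 * (ENNReal.ofReal (1 - p) ^ K) ^ a := by
  classical
  set η := ENNReal.ofReal (1 - p) ^ K
  have hη : η ≤ 1 := (lt_one_of_card_mul_le_inv_two hsmall).le
  let start (l : List (Move d)) : Pt d := (x - (displacement l).1, 1)
  let E (l : List (Move d)) : Set ((Fin (d + 1 + k) → ℤ) → Bool) :=
    {ω | (a : ℤ) ≤ (displacement l).2 ∧ (climbStates (start l) l).Nodup ∧
      ∀ c ∈ climbStates (start l) l, BoxClosed (2 * K) ω c}
  have hcover : {ω | ∃ h, 1 + (a : ℤ) ≤ h ∧ Reach (BoxClosed (2 * K) ω) (x, h)} ⊆ ⋃ l, E l := by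
    rintro ω ⟨h, hh, y, l₀, hbad, hend⟩
    obtain ⟨l, hdisp, hnd, hsub⟩ := exists_nodup_climbStates (y, 1) l₀
    obtain ⟨hx, hheight⟩ := Prod.ext_iff.mp hend
    simp only [Prod.fst_add, Prod.snd_add] at hx hheight
    have hstart : start l = (y, 1) := by simp [start, hdisp, ← hx]
    have hgain : (a : ℤ) ≤ (displacement l).2 := by rw [hdisp]; omega
    exact Set.mem_iUnion.mpr ⟨l, hgain, hstart ▸ hnd, hstart ▸ fun c hc => hbad c (hsub hc)⟩
  have hE (l : List (Move d)) : μ (E l) ≤ η ^ a * η ^ l.length := by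
    by_cases hgood : (a : ℤ) ≤ (displacement l).2 ∧ (climbStates (start l) l).Nodup
    · have hclimbs : a + l.length ≤ 2 * l.count none := by
        have := displacement_snd_add_length l; omega
      calc μ (E l) ≤ μ {ω | ∀ c ∈ (climbStates (start l) l).toFinset, BoxClosed (2 * K) ω c} :=
            measure_mono fun ω hω c hc => hω.2.2 c (List.mem_toFinset.mp hc)
        _ = η ^ (2 * l.count none) := by
            rw [measure_forall_boxClosed hμ, List.toFinset_card_of_nodup hgood.2,
              length_climbStates, ← pow_mul, mul_assoc, mul_left_comm]
        _ ≤ η ^ a * η ^ l.length := by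
            rw [← pow_add]; exact pow_le_pow_right_of_le_one' hη hclimbs
    · have : E l = ∅ := Set.eq_empty_of_forall_notMem fun ω hω => hgood ⟨hω.1, hω.2.1⟩
      simp [this]
  calc _ ≤ μ (⋃ l, E l) := measure_mono hcover
    _ ≤ ∑' l, μ (E l) := measure_iUnion_le E
    _ ≤ ∑' l : List (Move d), η ^ a * η ^ l.length := ENNReal.tsum_le_tsum hE
    _ = η ^ a * ∑' l : List (Move d), η ^ l.length := ENNReal.tsum_mul_left
    _ ≤ η ^ a * 2 := by gcongr; exact tsum_pow_length_le_two hsmall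
    _ = 2 * η ^ a := mul_comm _ _

lemma exists_card_mul_pow_le (hp : 0 < p) :
    ∃ K, 0 < K ∧ (Fintype.card (Move d) : ℝ≥0∞) * ENNReal.ofReal (1 - p) ^ K ≤ 2⁻¹ := by
  have hlim : Filter.Tendsto (fun K => (Fintype.card (Move d) : ℝ≥0∞) * ENNReal.ofReal (1 - p) ^ K)
      Filter.atTop (nhds 0) := by
    simpa using ENNReal.Tendsto.const_mul (ENNReal.tendsto_pow_atTop_nhds_zero_of_lt_one
      (ENNReal.ofReal_lt_one.mpr (show 1 - p < 1 by linarith))) (Or.inr (ENNReal.natCast_ne_top (Fintype.card (Move d))))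
  obtain ⟨K, hsmall, hK⟩ := ((hlim.eventually (gt_mem_nhds (by norm_num : (0 : ℝ≥0∞) < 2⁻¹))).and
    (Filter.eventually_gt_atTop 0)).exists
  exact ⟨K, hK, hsmall.le⟩

lemma ae_bddAbove_reach (hμ : IsBernoulli p μ) {K : ℕ}
    (hsmall : (Fintype.card (Move d) : ℝ≥0∞) * ENNReal.ofReal (1 - p) ^ K ≤ 2⁻¹) :
    ∀ᵐ ω ∂μ, ∀ x, BddAbove {h | Reach (BoxClosed (2 * K) ω) (x, h)} := by
  refine ae_all_iff.mpr fun x => ?_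
  set η := ENNReal.ofReal (1 - p) ^ K
  have hη : η < 1 := lt_one_of_card_mul_le_inv_two hsmall
  have hlim : Filter.Tendsto (fun a : ℕ => 2 * η ^ a) Filter.atTop (nhds 0) := by
    simpa using ENNReal.Tendsto.const_mul (ENNReal.tendsto_pow_atTop_nhds_zero_of_lt_one hη)
      (Or.inr ENNReal.ofNat_ne_top)
  refine ae_iff.mpr ?_
  refine le_antisymm (ge_of_tendsto' hlim fun a => ?_) zero_le
  refine le_trans (measure_mono fun ω hω => ?_) (measure_reach_ge_le hμ hsmall x a)
  obtain ⟨h, hr, hh⟩ := not_bddAbove_iff.mp hω (a : ℤ)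
  exact ⟨h, by omega, hr⟩

theorem existsQuasiIsometry_of_bddAbove_reach {K : ℕ} (hK : 0 < K)
    {ω : (Fin (d + 1 + k) → ℤ) → Bool}
    (hbdd : ∀ x, BddAbove {h | Reach (BoxClosed K ω) (x, h)}) :
    ExistsQuasiIsometry d (d + 1 + k) ω := by
  obtain ⟨φ, hopen, hlip⟩ := exists_lipschitz_surface hbdd
  have hsite (x : Fin d → ℤ) : ∃ j < K, ω (site K (x, φ x) j) = true := by
    simpa [BoxClosed, box] using hopen x
  choose j hjK hj using hsite
  have hdist (x x' : Fin d → ℤ) :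
      K * norm1 (x - x') ≤ norm1 (site (k := k) K (x, φ x) (j x) - site K (x', φ x') (j x')) ∧
      norm1 (site (k := k) K (x, φ x) (j x) - site K (x', φ x') (j x')) ≤
        2 * K * norm1 (x - x') + K := by
    rw [norm1_site_sub]
    have hφ : |(K : ℤ) * (φ x - φ x')| ≤ K * norm1 (x - x') := by
      rw [abs_mul, Nat.abs_cast]; exact mul_le_mul_of_nonneg_left (hlip x x') (by positivity)
    have hj' : |((j x : ℤ) - j x')| ≤ K := abs_le.mpr ⟨by linarith [hjK x'], by linarith [hjK x]⟩
    have := abs_add_le ((K : ℤ) * (φ x - φ x')) ((j x : ℤ) - j x')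
    constructor <;> linarith [abs_nonneg ((K : ℤ) * (φ x - φ x') + (j x - j x'))]
  refine existsQuasiIsometry_of_bounds (fun x => site K (x, φ x) (j x)) hj
    (c₁ := K) (c₂ := 1) (c₃ := 2 * K) (c₄ := K) (by positivity) one_pos (by positivity)
    (by positivity) fun x x' => ?_
  simp only [dist1]
  constructor
  · have := (hdist x x').1; exact_mod_cast (by linarith : (K : ℤ) * norm1 (x - x') - 1 ≤ _)
  · exact_mod_cast (hdist x x').2

end LipschitzSurface


theorem quasi_isometry_exists_general (d D : ℕ) (hdD : d < D)
    (p : ℝ) (hp0 : 0 < p)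
    (μ : Measure ((Fin D → ℤ) → Bool)) (hμ : IsBernoulli p μ) :
    ∀ᵐ ω ∂μ, ExistsQuasiIsometry d D ω := by
  obtain ⟨k, rfl⟩ := Nat.exists_eq_add_of_le hdD
  obtain ⟨K, hK, hsmall⟩ := LipschitzSurface.exists_card_mul_pow_le (d := d) hp0
  filter_upwards [LipschitzSurface.ae_bddAbove_reach hμ hsmall] with ω hω
  exact LipschitzSurface.existsQuasiIsometry_of_bddAbove_reach (by omega) hω

/-- For `1 ≤ d < D` and `p ∈ (0,1)`, `P_p`-a.s. there exists a quasi-isometry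
between `(ℤ^d, ℓ¹)` and some subspace of the open sites of `ℤ^D`. -/
theorem quasi_isometry_exists (d D : ℕ) (hd : 1 ≤ d) (hdD : d < D)
    (p : ℝ) (hp0 : 0 < p) (hp1 : p < 1)
    (μ : Measure ((Fin D → ℤ) → Bool)) (hμ : IsBernoulli p μ) :
    ∀ᵐ ω ∂μ, ExistsQuasiIsometry d D ω :=
  quasi_isometry_exists_general d D hdD p hp0 μ hμ
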